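/- Let F : ℝ^N → ℝ^N be continuously differentiable and K ⊆ ℝ^N. Let X = ℝ^N × ℝ^N × [0,∞), let G_K = {(x,y,t) ∈ X : |y−x| ≤ t·‖F‖_K and |y−x−t·F(x)| ≤ (t²/2)·‖(DF)F‖_K}, let R_K = {(x,y,t) ∈ X : x →_{F,K,t} y}, and define Γ_K : 𝒫(X) → 𝒫(X) by Γ_K(Z) = {(x,y,t) ∈ G_K : x ∈ K, y ∈ K, and ∃u ∈ ℝ^N with (x,u,t/2) ∈ Z and (u,y,t/2) ∈ Z}. Then Γ_K is monotone, and if K is compact then R_K is the greatest fixpoint of Γ_K; in particular R_K = Γ_K(R_K), and Z ⊆ R_K for every Z ⊆ X with Z ⊆ Γ_K(Z). -/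

import Mathlib

/-!
Cutting an integral curve at half time and gluing two of them show that `R_K` is a fixpoint of
`Γ_K`; the two inequalities defining `G_K` are the first- and second-order Taylor estimates along
a curve that stays in `K`.

For a post-fixpoint `Z` and `(x, y, t) ∈ Z`, repeated halving yields for every `n` points
`x = p₀, …, p_{2ⁿ} = y` of `K`, each level refining the previous one, whose consecutive pairs lie
in `G_K` with time step `h = t / 2ⁿ`. By the first bound of `G_K`, the step interpolations of
these chains converge to a `‖F‖_K`-Lipschitz curve `γ` through all the points. By the second
bound, the defect `γ s - x - ∫₀ˢ F (γ r) dr` is at most `t (h ‖(DF)F‖_K / 2 + ε)` at the grid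
points once `F ∘ γ` varies by at most `ε` over intervals of length `h`. So `γ` solves the integral
equation: it is an integral curve from `x` to `y` inside the closed set `K`.
-/

open Set

namespace ODEGfp

/-- `γ` is an integral curve of `F` on `[0, t]`: it is continuous on `[0, t]` and
differentiable on `(0, t)` with derivative `γ'(s) = F(γ(s))`. -/
def IsIntCurve {N : ℕ} (F : EuclideanSpace ℝ (Fin N) → EuclideanSpace ℝ (Fin N))
    (t : ℝ) (γ : ℝ → EuclideanSpace ℝ (Fin N)) : Prop :=
  ContinuousOn γ (Set.Icc 0 t) ∧ ∀ s ∈ Set.Ioo 0 t, HasDerivAt γ (F (γ s)) s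

/-- `x →_{F,K,t} y`: `y` is `t`-reachable from `x` along `F` within `K`. -/
def Reach {N : ℕ} (F : EuclideanSpace ℝ (Fin N) → EuclideanSpace ℝ (Fin N))
    (K : Set (EuclideanSpace ℝ (Fin N))) (t : ℝ)
    (x y : EuclideanSpace ℝ (Fin N)) : Prop :=
  ∃ γ : ℝ → EuclideanSpace ℝ (Fin N), IsIntCurve F t γ ∧ γ 0 = x ∧ γ t = y ∧
    ∀ s ∈ Set.Icc 0 t, γ s ∈ K

/-- The sup-norm `‖G‖_K = sup_{z ∈ K} |G z|`, valued in `[0, ∞]`. -/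
noncomputable def supNorm {N : ℕ}
    (G : EuclideanSpace ℝ (Fin N) → EuclideanSpace ℝ (Fin N))
    (K : Set (EuclideanSpace ℝ (Fin N))) : ENNReal :=
  ⨆ z ∈ K, (‖G z‖₊ : ENNReal)

/-- The reachability set `R_K ⊆ X = ℝ^N × ℝ^N × [0,∞)`. -/
def RK {N : ℕ} (F : EuclideanSpace ℝ (Fin N) → EuclideanSpace ℝ (Fin N))
    (K : Set (EuclideanSpace ℝ (Fin N))) :
    Set (EuclideanSpace ℝ (Fin N) × EuclideanSpace ℝ (Fin N) × ℝ) :=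
  {p | 0 ≤ p.2.2 ∧ Reach F K p.2.2 p.1 p.2.1}

/-- The set `G_K` of triples within the Taylor growth bounds. -/
def GK {N : ℕ} (F : EuclideanSpace ℝ (Fin N) → EuclideanSpace ℝ (Fin N))
    (K : Set (EuclideanSpace ℝ (Fin N))) :
    Set (EuclideanSpace ℝ (Fin N) × EuclideanSpace ℝ (Fin N) × ℝ) :=
  {p | 0 ≤ p.2.2 ∧
    (‖p.2.1 - p.1‖₊ : ENNReal) ≤ ENNReal.ofReal p.2.2 * supNorm F K ∧
    (‖p.2.1 - p.1 - p.2.2 • F p.1‖₊ : ENNReal)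
      ≤ ENNReal.ofReal (p.2.2 ^ 2 / 2) * supNorm (fun z => fderiv ℝ F z (F z)) K}

/-- The monotone map `Γ_K`. -/
def GammaK {N : ℕ} (F : EuclideanSpace ℝ (Fin N) → EuclideanSpace ℝ (Fin N))
    (K : Set (EuclideanSpace ℝ (Fin N)))
    (Z : Set (EuclideanSpace ℝ (Fin N) × EuclideanSpace ℝ (Fin N) × ℝ)) :
    Set (EuclideanSpace ℝ (Fin N) × EuclideanSpace ℝ (Fin N) × ℝ) :=
  {p | p ∈ GK F K ∧ p.1 ∈ K ∧ p.2.1 ∈ K ∧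
    ∃ u : EuclideanSpace ℝ (Fin N),
      (p.1, u, p.2.2 / 2) ∈ Z ∧ (u, p.2.1, p.2.2 / 2) ∈ Z}

end ODEGfp

open Filter Topology MeasureTheory intervalIntegral

section Chain

variable {E : Type*} [SeminormedAddCommGroup E]

theorem norm_sub_le_of_norm_succ_sub_le {f : ℕ → E} {m : ℕ} {c : ℝ}
    (hf : ∀ k < m, ‖f (k + 1) - f k‖ ≤ c) {i j : ℕ} (hij : i ≤ j) (hj : j ≤ m) :
    ‖f j - f i‖ ≤ ((j : ℝ) - i) * c := by
  have := dist_le_Ico_sum_of_dist_le hij (d := fun _ => c) fun _ hk =>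
    (dist_comm _ _).trans_le <| (dist_eq_norm _ _).trans_le <| hf _ (hk.trans_le hj)
  rwa [Finset.sum_const, Nat.card_Ico, nsmul_eq_mul, Nat.cast_sub hij, dist_comm,
    dist_eq_norm] at this

end Chain

section Calculus

variable {E : Type*} [NormedAddCommGroup E] [NormedSpace ℝ E]

theorem ContDiff.continuous_fderiv_apply_self {F : E → E} (hF : ContDiff ℝ 1 F) :
    Continuous fun z => fderiv ℝ F z (F z) :=
  (hF.continuous_fderiv one_ne_zero).clm_apply hF.continuous

variable [CompleteSpace E]

theorem norm_sub_le_integral_of_hasDerivAt {f f' : ℝ → E} {g : ℝ → ℝ} {a b : ℝ}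
    (hab : a ≤ b) (hf : ContinuousOn f (Icc a b)) (hf' : ∀ s ∈ Ioo a b, HasDerivAt f (f' s) s)
    (hf'i : IntervalIntegrable f' volume a b) (hgi : IntervalIntegrable g volume a b)
    (hbound : ∀ s ∈ Ioc a b, ‖f' s‖ ≤ g s) :
    ‖f b - f a‖ ≤ ∫ s in a..b, g s := by
  rw [← integral_eq_sub_of_hasDerivAt_of_le hab hf hf' hf'i]
  exact norm_integral_le_of_norm_le hab (Eventually.of_forall hbound) hgi

theorem norm_integral_sub_smul_le {f : ℝ → E} {a b ε : ℝ} (hab : a ≤ b)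
    (hf : IntervalIntegrable f volume a b) (hε : ∀ s ∈ Icc a b, ‖f s - f a‖ ≤ ε) :
    ‖(∫ s in a..b, f s) - (b - a) • f a‖ ≤ (b - a) * ε := by
  rw [← intervalIntegral.integral_const, ← integral_sub hf intervalIntegrable_const, mul_comm,
    ← abs_of_nonneg (sub_nonneg.2 hab)]
  refine norm_integral_le_of_norm_le_const fun s hs => hε s ?_
  rw [uIoc_of_le hab] at hs
  exact Ioc_subset_Icc_self hs

variable {F : E → E} {γ : ℝ → E} {t : ℝ}

theorem eq_add_integral_of_hasDerivAt (hF : Continuous F) (hγc : ContinuousOn γ (Icc 0 t))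
    (hγd : ∀ s ∈ Ioo 0 t, HasDerivAt γ (F (γ s)) s) {s : ℝ} (hs : s ∈ Icc 0 t) :
    γ s = γ 0 + ∫ r in 0..s, F (γ r) := by
  have hγs : ContinuousOn γ (Icc 0 s) := hγc.mono (Icc_subset_Icc_right hs.2)
  rw [integral_eq_sub_of_hasDerivAt_of_le hs.1 hγs
    (fun r hr => hγd r ⟨hr.1, hr.2.trans_le hs.2⟩)
    ((hF.comp_continuousOn hγs).intervalIntegrable_of_Icc hs.1)]
  abel

theorem hasDerivAt_of_eq_add_integral (hF : Continuous F) (hγc : ContinuousOn γ (Icc 0 t))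
    (hγ : ∀ s ∈ Icc 0 t, γ s = γ 0 + ∫ r in 0..s, F (γ r)) {s : ℝ}
    (hs : s ∈ Ioo 0 t) : HasDerivAt γ (F (γ s)) s := by
  have hFγ : ContinuousOn (fun r => F (γ r)) (Icc 0 t) := hF.comp_continuousOn hγc
  have hd : HasDerivAt (fun u => γ 0 + ∫ r in 0..u, F (γ r)) (F (γ s)) s :=
    (integral_hasDerivAt_right
      ((hFγ.mono (Icc_subset_Icc_right hs.2.le)).intervalIntegrable_of_Icc hs.1.le)
      ((hFγ.mono Ioo_subset_Icc_self).stronglyMeasurableAtFilter isOpen_Ioo s hs)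
      (hFγ.continuousAt (Icc_mem_nhds hs.1 hs.2))).const_add _
  refine hd.congr_of_eventuallyEq ?_
  filter_upwards [Icc_mem_nhds hs.1 hs.2] with r hr using hγ r hr

end Calculus

section GluedCurve

variable {E : Type*} {t₁ s : ℝ} {γ₁ γ₂ : ℝ → E}

noncomputable def appendCurve (t₁ : ℝ) (γ₁ γ₂ : ℝ → E) (s : ℝ) : E :=
  if s ≤ t₁ then γ₁ s else γ₂ (s - t₁)

theorem appendCurve_of_le (hs : s ≤ t₁) : appendCurve t₁ γ₁ γ₂ s = γ₁ s := if_pos hs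

theorem appendCurve_of_ge (h : γ₁ t₁ = γ₂ 0) (hs : t₁ ≤ s) :
    appendCurve t₁ γ₁ γ₂ s = γ₂ (s - t₁) := by
  rcases hs.eq_or_lt with rfl | hs
  · rw [appendCurve_of_le le_rfl, sub_self, h]
  · exact if_neg hs.not_ge

end GluedCurve

theorem coe_nnnorm_le_ofReal_mul_iff {E : Type*} [SeminormedAddCommGroup E] {v : E} {τ : ℝ}
    (hτ : 0 ≤ τ) {S : ENNReal} (hS : S ≠ ⊤) :
    (‖v‖₊ : ENNReal) ≤ ENNReal.ofReal τ * S ↔ ‖v‖ ≤ τ * S.toReal := by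
  rw [← enorm_eq_nnnorm, ← ofReal_norm, ← ENNReal.ofReal_le_ofReal_iff (by positivity),
    ENNReal.ofReal_mul hτ, ENNReal.ofReal_toReal hS]

theorem exists_dyadic_subdivision {α : Type*} {Z : Set (α × α × ℝ)}
    (hZ : ∀ a b τ, (a, b, τ) ∈ Z → ∃ u, (a, u, τ / 2) ∈ Z ∧ (u, b, τ / 2) ∈ Z)
    {x y : α} {t : ℝ} (h : (x, y, t) ∈ Z) :
    ∃ d : ℕ → ℕ → α, d 0 0 = x ∧ d 0 1 = y ∧ (∀ n k, d (n + 1) (2 * k) = d n k) ∧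
      ∀ n, ∀ k < 2 ^ n, (d n k, d n (k + 1), t / 2 ^ n) ∈ Z := by
  have : Nonempty α := ⟨x⟩
  choose! mid hmid using hZ
  -- Level `n + 1` keeps the points of level `n` at even indices and inserts midpoints.
  let d : ℕ → ℕ → α := fun n => Nat.rec (fun k => if k = 0 then x else y)
    (fun n dn m => if m % 2 = 0 then dn (m / 2)
      else mid (dn (m / 2)) (dn (m / 2 + 1)) (t / 2 ^ n)) n
  have hd_even : ∀ n k, d (n + 1) (2 * k) = d n k := fun n k => by
    simp [d]
  have hd_odd : ∀ n k, d (n + 1) (2 * k + 1) = mid (d n k) (d n (k + 1)) (t / 2 ^ n) :=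
    fun n k => by simp [d, Nat.add_mod, Nat.add_div]
  refine ⟨d, rfl, rfl, hd_even, fun n => ?_⟩
  induction n with
  | zero => simpa [d] using h
  | succ n ih =>
    intro k hk
    have hτ : t / 2 ^ n / 2 = t / 2 ^ (n + 1) := by ring
    obtain ⟨j, rfl | rfl⟩ := Nat.even_or_odd' k
    · rw [hd_even, hd_odd, ← hτ]
      exact (hmid _ _ _ (ih j (by omega))).1
    · rw [hd_odd, show 2 * j + 1 + 1 = 2 * (j + 1) by ring, hd_even, ← hτ]
      exact (hmid _ _ _ (ih j (by omega))).2

/-- `dyadicIndex t n s * (t / 2 ^ n)` is the last point of the grid `(t / 2 ^ n) ℕ` up to `s`. -/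
noncomputable def dyadicIndex (t : ℝ) (n : ℕ) (s : ℝ) : ℕ := ⌊s * 2 ^ n / t⌋₊

section DyadicIndex

variable {t s : ℝ} (n : ℕ)

theorem dyadicIndex_le (ht : 0 < t) (hs : s ≤ t) : dyadicIndex t n s ≤ 2 ^ n := by
  refine Nat.floor_le_of_le ?_
  rw [div_le_iff₀ ht]
  push_cast
  nlinarith [pow_pos (two_pos : (0:ℝ) < 2) n]

theorem dyadicIndex_mul_le (ht : 0 < t) (hs : 0 ≤ s) : dyadicIndex t n s * (t / 2 ^ n) ≤ s := by
  unfold dyadicIndex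
  have := Nat.floor_le (a := s * 2 ^ n / t) (by positivity)
  rw [le_div_iff₀ ht] at this
  rw [mul_div_assoc', div_le_iff₀ (by positivity)]
  linarith

theorem lt_dyadicIndex_add_one_mul (ht : 0 < t) : s < (dyadicIndex t n s + 1) * (t / 2 ^ n) := by
  have := Nat.lt_floor_add_one (s * 2 ^ n / t)
  rw [div_lt_iff₀ ht] at this
  rw [mul_div_assoc', lt_div_iff₀ (by positivity)]
  exact this

theorem dyadicIndex_succ (ht : 0 < t) (hs : 0 ≤ s) :
    dyadicIndex t (n + 1) s = 2 * dyadicIndex t n s ∨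
      dyadicIndex t (n + 1) s = 2 * dyadicIndex t n s + 1 := by
  unfold dyadicIndex
  have hx : s * 2 ^ (n + 1) / t = 2 * (s * 2 ^ n / t) := by ring
  have h₁ : 2 * ⌊s * 2 ^ n / t⌋₊ ≤ ⌊s * 2 ^ (n + 1) / t⌋₊ := by
    refine Nat.le_floor ?_
    rw [hx]
    push_cast
    linarith [Nat.floor_le (a := s * 2 ^ n / t) (by positivity)]
  have h₂ : ⌊s * 2 ^ (n + 1) / t⌋₊ < 2 * ⌊s * 2 ^ n / t⌋₊ + 2 := by
    refine (Nat.floor_lt (by positivity)).2 ?_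
    rw [hx]
    push_cast
    linarith [Nat.lt_floor_add_one (s * 2 ^ n / t)]
  omega

theorem dyadicIndex_natCast_mul (ht : 0 < t) (m k : ℕ) :
    dyadicIndex t (n + m) (k * (t / 2 ^ n)) = 2 ^ m * k := by
  rw [dyadicIndex, show (k : ℝ) * (t / 2 ^ n) * 2 ^ (n + m) / t = ((2 ^ m * k : ℕ) : ℝ) by
    push_cast; field_simp; ring]
  exact Nat.floor_natCast _

theorem tendsto_dyadicIndex_mul (ht : 0 < t) (hs : 0 ≤ s) :
    Tendsto (fun n : ℕ => dyadicIndex t n s * (t / 2 ^ n)) atTop (𝓝 s) := by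
  have hh : Tendsto (fun n : ℕ => t / 2 ^ n) atTop (𝓝 0) :=
    tendsto_const_nhds.div_atTop (tendsto_pow_atTop_atTop_of_one_lt one_lt_two)
  refine tendsto_of_tendsto_of_tendsto_of_le_of_le (by simpa using tendsto_const_nhds.sub hh)
    tendsto_const_nhds (fun n => ?_) (fun n => dyadicIndex_mul_le n ht hs)
  have := lt_dyadicIndex_add_one_mul (s := s) n ht
  simp only
  linarith

end DyadicIndex

theorem natCast_mul_div_two_pow_mem_Icc {t : ℝ} (ht : 0 ≤ t) {n k : ℕ} (hk : k ≤ 2 ^ n) :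
    (k : ℝ) * (t / 2 ^ n) ∈ Icc 0 t := by
  refine ⟨by positivity, ?_⟩
  calc (k : ℝ) * (t / 2 ^ n) ≤ 2 ^ n * (t / 2 ^ n) := by gcongr; exact_mod_cast hk
    _ = t := by field_simp

section

variable {E : Type*} [NormedAddCommGroup E] [NormedSpace ℝ E]

/-- `pt n k` stands for the value at time `k * (t / 2 ^ n)` of the curve being approximated. -/
structure DyadicChain (F : E → E) (K : Set E) (t C M : ℝ) where
  pt : ℕ → ℕ → E
  t_pos : 0 < t
  pt_succ_two_mul (n k : ℕ) : pt (n + 1) (2 * k) = pt n k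
  pt_mem (n k : ℕ) : k ≤ 2 ^ n → pt n k ∈ K
  norm_pt_succ_sub_le (n k : ℕ) : k < 2 ^ n → ‖pt n (k + 1) - pt n k‖ ≤ t / 2 ^ n * C
  norm_pt_succ_sub_sub_smul_le (n k : ℕ) : k < 2 ^ n →
    ‖pt n (k + 1) - pt n k - (t / 2 ^ n) • F (pt n k)‖ ≤ (t / 2 ^ n) ^ 2 / 2 * M

namespace DyadicChain

variable {F : E → E} {K : Set E} {t C M : ℝ} (S : DyadicChain F K t C M)

noncomputable def curve (s : ℝ) : E := limUnder atTop fun n => S.pt n (dyadicIndex t n s)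

theorem C_nonneg (S : DyadicChain F K t C M) : 0 ≤ C :=
  nonneg_of_mul_nonneg_right ((norm_nonneg _).trans (S.norm_pt_succ_sub_le 0 0 (by simp)))
    (by simpa using S.t_pos)

theorem pt_add_two_pow_mul (n m k : ℕ) : S.pt (n + m) (2 ^ m * k) = S.pt n k := by
  induction m with
  | zero => simp
  | succ m ih => rw [← add_assoc, pow_succ', mul_assoc, S.pt_succ_two_mul, ih]

theorem dist_pt_le {n i j : ℕ} (hi : i ≤ 2 ^ n) (hj : j ≤ 2 ^ n) :
    dist (S.pt n i) (S.pt n j) ≤ C * |i * (t / 2 ^ n) - j * (t / 2 ^ n)| := by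
  wlog hij : i ≤ j generalizing i j
  · rw [dist_comm, abs_sub_comm]
    exact this hj hi (le_of_not_ge hij)
  have hh : 0 < t / 2 ^ n := div_pos S.t_pos (by positivity)
  rw [dist_comm, dist_eq_norm, abs_of_nonpos (sub_nonpos.2 (by gcongr))]
  calc ‖S.pt n j - S.pt n i‖ ≤ ((j : ℝ) - i) * (t / 2 ^ n * C) :=
        norm_sub_le_of_norm_succ_sub_le (S.norm_pt_succ_sub_le n) hij hj
    _ = C * -(i * (t / 2 ^ n) - j * (t / 2 ^ n)) := by ring

theorem dist_pt_dyadicIndex_succ_le {s : ℝ} (hs : s ∈ Icc 0 t) (n : ℕ) :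
    dist (S.pt n (dyadicIndex t n s)) (S.pt (n + 1) (dyadicIndex t (n + 1) s)) ≤
      t * C / 2 / 2 ^ n := by
  have hle := dyadicIndex_le (n + 1) S.t_pos hs.2
  rcases dyadicIndex_succ n S.t_pos hs.1 with h | h <;> rw [h] at hle ⊢
  · rw [S.pt_succ_two_mul, dist_self]
    have := S.C_nonneg
    have := S.t_pos
    positivity
  · rw [← S.pt_succ_two_mul n, dist_comm, dist_eq_norm]
    refine (S.norm_pt_succ_sub_le (n + 1) _ (by omega)).trans_eq ?_
    ring

variable [CompleteSpace E]

theorem tendsto_curve {s : ℝ} (hs : s ∈ Icc 0 t) :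
    Tendsto (fun n => S.pt n (dyadicIndex t n s)) atTop (𝓝 (S.curve s)) :=
  tendsto_nhds_limUnder <| cauchySeq_tendsto_of_complete <|
    cauchySeq_of_le_geometric_two (S.dist_pt_dyadicIndex_succ_le hs)

theorem curve_natCast_mul {n k : ℕ} (hk : k ≤ 2 ^ n) :
    S.curve (k * (t / 2 ^ n)) = S.pt n k := by
  refine tendsto_nhds_unique (S.tendsto_curve (natCast_mul_div_two_pow_mem_Icc S.t_pos.le hk))
    (tendsto_atTop_of_eventually_const (i₀ := n) fun m hm => ?_)
  obtain ⟨m, rfl⟩ := Nat.exists_eq_add_of_le hm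
  rw [dyadicIndex_natCast_mul n S.t_pos, S.pt_add_two_pow_mul]

theorem curve_zero : S.curve 0 = S.pt 0 0 := by
  simpa using S.curve_natCast_mul (n := 0) (k := 0) (Nat.zero_le _)

theorem curve_self : S.curve t = S.pt 0 1 := by
  simpa using S.curve_natCast_mul (n := 0) (k := 1) (by norm_num)

theorem curve_mem (hK : IsClosed K) {s : ℝ} (hs : s ∈ Icc 0 t) : S.curve s ∈ K :=
  hK.mem_of_tendsto (S.tendsto_curve hs) <|
    Eventually.of_forall fun n => S.pt_mem n _ (dyadicIndex_le n S.t_pos hs.2)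

theorem dist_curve_le {s s' : ℝ} (hs : s ∈ Icc 0 t) (hs' : s' ∈ Icc 0 t) :
    dist (S.curve s) (S.curve s') ≤ C * dist s s' :=
  le_of_tendsto_of_tendsto ((S.tendsto_curve hs).dist (S.tendsto_curve hs'))
    ((((tendsto_dyadicIndex_mul S.t_pos hs.1).sub
      (tendsto_dyadicIndex_mul S.t_pos hs'.1)).abs).const_mul C)
    (Eventually.of_forall fun n =>
      S.dist_pt_le (dyadicIndex_le n S.t_pos hs.2) (dyadicIndex_le n S.t_pos hs'.2))

theorem continuousOn_curve : ContinuousOn S.curve (Icc 0 t) :=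
  (LipschitzOnWith.of_dist_le_mul fun _ hs _ hs' => (S.dist_curve_le hs hs').trans <|
    mul_le_mul_of_nonneg_right (Real.le_coe_toNNReal C) dist_nonneg).continuousOn

noncomputable def defect (s : ℝ) : E := S.curve s - S.curve 0 - ∫ r in 0..s, F (S.curve r)

theorem intervalIntegrable_comp_curve (hF : Continuous F) {a b : ℝ} (ha : 0 ≤ a) (hab : a ≤ b)
    (hb : b ≤ t) : IntervalIntegrable (fun r => F (S.curve r)) volume a b :=
  ((hF.comp_continuousOn S.continuousOn_curve).mono
    (Icc_subset_Icc ha hb)).intervalIntegrable_of_Icc hab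

theorem continuousOn_defect (hF : Continuous F) : ContinuousOn S.defect (Icc 0 t) := by
  have hprim := continuousOn_primitive_interval (a := 0) (b := t) (μ := volume)
    (f := fun r => F (S.curve r)) (by
      rw [uIcc_of_le S.t_pos.le]
      exact (hF.comp_continuousOn S.continuousOn_curve).integrableOn_Icc)
  rw [uIcc_of_le S.t_pos.le] at hprim
  exact (S.continuousOn_curve.sub continuousOn_const).sub hprim

theorem norm_defect_succ_sub_le (hF : Continuous F) {n : ℕ} {ε : ℝ}
    (hε : ∀ r ∈ Icc 0 t, ∀ r' ∈ Icc 0 t, dist r r' ≤ t / 2 ^ n →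
      dist (F (S.curve r)) (F (S.curve r')) ≤ ε) {j : ℕ} (hj : j < 2 ^ n) :
    ‖S.defect ((j + 1 : ℕ) * (t / 2 ^ n)) - S.defect (j * (t / 2 ^ n))‖ ≤
      (t / 2 ^ n) ^ 2 / 2 * M + t / 2 ^ n * ε := by
  set h := t / 2 ^ n
  have ha := natCast_mul_div_two_pow_mem_Icc S.t_pos.le hj.le
  have hb := natCast_mul_div_two_pow_mem_Icc S.t_pos.le (Nat.succ_le_of_lt hj)
  have hab : (j : ℝ) * h ≤ (j + 1 : ℕ) * h :=
    mul_le_mul_of_nonneg_right (by push_cast; linarith) (div_pos S.t_pos (by positivity)).le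
  have hint := S.intervalIntegrable_comp_curve hF ha.1 hab hb.2
  have hlen : ((j + 1 : ℕ) : ℝ) * h - j * h = h := by push_cast; ring
  have hmean := norm_integral_sub_smul_le hab hint fun r hr =>
    (dist_eq_norm _ _).symm.trans_le <| hε r ⟨ha.1.trans hr.1, hr.2.trans hb.2⟩ _ ha
      (by rw [Real.dist_eq, abs_of_nonneg (sub_nonneg.2 hr.1)]; linarith [hr.2])
  rw [hlen, S.curve_natCast_mul hj.le] at hmean
  calc _ = ‖(S.pt n (j + 1) - S.pt n j - h • F (S.pt n j)) -
        ((∫ r in j * h..(j + 1 : ℕ) * h, F (S.curve r)) - h • F (S.pt n j))‖ := by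
        rw [defect, defect, S.curve_natCast_mul hj.le, S.curve_natCast_mul (Nat.succ_le_of_lt hj),
          ← integral_add_adjacent_intervals
            (S.intervalIntegrable_comp_curve hF le_rfl ha.1 ha.2) hint]
        congr 1
        abel
    _ ≤ h ^ 2 / 2 * M + h * ε :=
      (norm_sub_le _ _).trans (add_le_add (S.norm_pt_succ_sub_sub_smul_le n j hj) hmean)

theorem norm_defect_natCast_mul_le (hF : Continuous F) {n : ℕ} {ε : ℝ}
    (hε : ∀ r ∈ Icc 0 t, ∀ r' ∈ Icc 0 t, dist r r' ≤ t / 2 ^ n →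
      dist (F (S.curve r)) (F (S.curve r')) ≤ ε) {k : ℕ} (hk : k ≤ 2 ^ n) :
    ‖S.defect (k * (t / 2 ^ n))‖ ≤ t * (t / 2 ^ n / 2 * M + ε) := by
  have hsum := norm_sub_le_of_norm_succ_sub_le (f := fun j : ℕ => S.defect (j * (t / 2 ^ n)))
    (fun j hj => S.norm_defect_succ_sub_le hF hε hj) (Nat.zero_le k) hk
  have : S.defect 0 = 0 := by simp [defect]
  simp only [Nat.cast_zero, zero_mul, this, sub_zero] at hsum
  calc _ ≤ (k : ℝ) * ((t / 2 ^ n) ^ 2 / 2 * M + t / 2 ^ n * ε) := hsum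
    _ ≤ 2 ^ n * ((t / 2 ^ n) ^ 2 / 2 * M + t / 2 ^ n * ε) :=
      mul_le_mul_of_nonneg_right (by exact_mod_cast hk)
        ((norm_nonneg _).trans (S.norm_defect_succ_sub_le hF hε (Nat.two_pow_pos n)))
    _ = t * (t / 2 ^ n / 2 * M + ε) := by field_simp

theorem defect_eq_zero (hF : Continuous F) {s : ℝ} (hs : s ∈ Icc 0 t) : S.defect s = 0 := by
  have hbound : ∀ ε > 0, ‖S.defect s‖ ≤ t * ε := by
    intro ε hε
    obtain ⟨δ, hδ, hω⟩ := Metric.uniformContinuousOn_iff_le.1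
      (isCompact_Icc.uniformContinuousOn_of_continuous
        (hF.comp_continuousOn S.continuousOn_curve)) ε hε
    have hh : Tendsto (fun n : ℕ => t / 2 ^ n) atTop (𝓝 0) :=
      tendsto_const_nhds.div_atTop (tendsto_pow_atTop_atTop_of_one_lt one_lt_two)
    refine le_of_tendsto_of_tendsto
      (((S.continuousOn_defect hF).continuousWithinAt hs).tendsto.comp
        (tendsto_nhdsWithin_iff.2 ⟨tendsto_dyadicIndex_mul S.t_pos hs.1, Eventually.of_forall
          fun n => natCast_mul_div_two_pow_mem_Icc S.t_pos.le
            (dyadicIndex_le n S.t_pos hs.2)⟩)).norm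
      (by simpa using ((hh.div_const 2).mul_const M).add_const ε |>.const_mul t)
      ((hh.eventually_le_const hδ).mono fun n hn => ?_)
    exact S.norm_defect_natCast_mul_le hF (fun r hr r' hr' hrr' => hω r hr r' hr' (hrr'.trans hn))
      (dyadicIndex_le n S.t_pos hs.2)
  refine norm_le_zero_iff.1 (le_of_forall_pos_le_add fun ε hε => ?_)
  simpa [mul_div_cancel₀ _ S.t_pos.ne'] using hbound (ε / t) (div_pos hε S.t_pos)

theorem curve_eq_add_integral (hF : Continuous F) {s : ℝ} (hs : s ∈ Icc 0 t) :
    S.curve s = S.curve 0 + ∫ r in 0..s, F (S.curve r) := by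
  rw [← sub_eq_zero, ← sub_sub]
  exact S.defect_eq_zero hF hs

end DyadicChain

end

namespace ODEGfp

variable {N : ℕ} {F : EuclideanSpace ℝ (Fin N) → EuclideanSpace ℝ (Fin N)}
  {K : Set (EuclideanSpace ℝ (Fin N))} {γ γ₁ γ₂ : ℝ → EuclideanSpace ℝ (Fin N)}
  {x y u : EuclideanSpace ℝ (Fin N)} {s t t₁ t₂ : ℝ}

theorem isIntCurve_iff (hF : Continuous F) :
    IsIntCurve F t γ ↔
      ContinuousOn γ (Icc 0 t) ∧ ∀ s ∈ Icc 0 t, γ s = γ 0 + ∫ r in 0..s, F (γ r) :=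
  ⟨fun h => ⟨h.1, fun _ hs => eq_add_integral_of_hasDerivAt hF h.1 h.2 hs⟩,
    fun h => ⟨h.1, fun _ hs => hasDerivAt_of_eq_add_integral hF h.1 h.2 hs⟩⟩

theorem IsIntCurve.mono (h : IsIntCurve F t γ) (hst : s ≤ t) : IsIntCurve F s γ :=
  ⟨h.1.mono (Icc_subset_Icc_right hst), fun r hr => h.2 r ⟨hr.1, hr.2.trans_le hst⟩⟩

theorem IsIntCurve.comp_add_right (h : IsIntCurve F t γ) (hs : 0 ≤ s) :
    IsIntCurve F (t - s) fun r => γ (r + s) :=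
  ⟨h.1.comp (continuous_add_const s).continuousOn fun r hr =>
      ⟨by linarith [hr.1], by linarith [hr.2]⟩,
    fun r hr => HasDerivAt.comp_add_const r s
      (h.2 (r + s) ⟨by linarith [hr.1], by linarith [hr.2]⟩)⟩

theorem IsIntCurve.append (hF : Continuous F) (ht₁ : 0 ≤ t₁) (ht₂ : 0 ≤ t₂)
    (h₁ : IsIntCurve F t₁ γ₁) (h₂ : IsIntCurve F t₂ γ₂) (h : γ₁ t₁ = γ₂ 0) :
    IsIntCurve F (t₁ + t₂) (appendCurve t₁ γ₁ γ₂) := by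
  set δ := appendCurve t₁ γ₁ γ₂
  have hδ₁ : ∀ s ≤ t₁, δ s = γ₁ s := fun _ => appendCurve_of_le
  have hδ₂ : ∀ s, t₁ ≤ s → δ s = γ₂ (s - t₁) := fun _ => appendCurve_of_ge h
  have hδ : ContinuousOn δ (Icc 0 (t₁ + t₂)) := by
    rw [← Icc_union_Icc_eq_Icc ht₁ (le_add_of_nonneg_right ht₂)]
    refine ContinuousOn.union_of_isClosed ?_ ?_ isClosed_Icc isClosed_Icc
    · exact h₁.1.congr fun s hs => hδ₁ s hs.2
    · refine (h₂.1.comp (continuous_sub_right t₁).continuousOn fun s hs =>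
        ⟨by linarith [hs.1], by linarith [hs.2]⟩).congr fun s hs => hδ₂ s hs.1
  have hint : ∀ a b, 0 ≤ a → a ≤ b → b ≤ t₁ + t₂ →
      IntervalIntegrable (fun r => F (δ r)) volume a b := fun a b ha hab hb =>
    ((hF.comp_continuousOn hδ).mono (Icc_subset_Icc ha hb)).intervalIntegrable_of_Icc hab
  rw [isIntCurve_iff hF] at h₁ h₂ ⊢
  have hδ₀ : δ 0 = γ₁ 0 := hδ₁ 0 ht₁
  have hfirst : ∀ s ∈ Icc 0 t₁, δ s = δ 0 + ∫ r in 0..s, F (δ r) := fun s hs => by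
    rw [hδ₁ s hs.2, hδ₀, h₁.2 s hs]
    congr 1
    refine integral_congr fun r hr => ?_
    rw [uIcc_of_le hs.1] at hr
    exact congrArg F (hδ₁ r (hr.2.trans hs.2)).symm
  refine ⟨hδ, fun s hs => (le_total s t₁).elim (fun hs₁ => hfirst s ⟨hs.1, hs₁⟩)
    fun hs₁ => ?_⟩
  have hshift : ∫ r in 0..s - t₁, F (γ₂ r) = ∫ r in t₁..s, F (δ r) := by
    rw [← sub_self t₁, ← integral_comp_sub_right (fun r => F (γ₂ r))]
    refine integral_congr fun r hr => ?_
    rw [uIcc_of_le hs₁] at hr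
    exact congrArg F (hδ₂ r hr.1).symm
  rw [hδ₂ s hs₁, h₂.2 (s - t₁) ⟨sub_nonneg.2 hs₁, by linarith [hs.2]⟩, ← h, ← hδ₁ t₁ le_rfl,
    hfirst t₁ ⟨ht₁, le_rfl⟩, hshift, add_assoc,
    integral_add_adjacent_intervals (hint 0 t₁ le_rfl ht₁ (by linarith))
      (hint t₁ s ht₁ hs₁ hs.2)]

theorem IsIntCurve.norm_sub_le (hF : Continuous F) (h : IsIntCurve F t γ) (ht : 0 ≤ t) {C : ℝ}
    (hC : ∀ s ∈ Icc 0 t, ‖F (γ s)‖ ≤ C) : ‖γ t - γ 0‖ ≤ t * C := by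
  simpa [mul_comm] using norm_sub_le_integral_of_hasDerivAt ht h.1 h.2
    ((hF.comp_continuousOn h.1).intervalIntegrable_of_Icc ht) intervalIntegrable_const
    fun s hs => hC s (Ioc_subset_Icc_self hs)

theorem IsIntCurve.norm_sub_sub_smul_le (hF : ContDiff ℝ 1 F) (h : IsIntCurve F t γ)
    (ht : 0 ≤ t) {M : ℝ} (hM : ∀ s ∈ Icc 0 t, ‖fderiv ℝ F (γ s) (F (γ s))‖ ≤ M) :
    ‖γ t - γ 0 - t • F (γ 0)‖ ≤ t ^ 2 / 2 * M := by
  have hFγ : ContinuousOn (fun s => F (γ s)) (Icc 0 t) := hF.continuous.comp_continuousOn h.1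
  have hFγ_sub : ∀ s ∈ Icc 0 t, ‖F (γ s) - F (γ 0)‖ ≤ M * s := fun s hs => by
    simpa [mul_comm] using norm_sub_le_integral_of_hasDerivAt hs.1
      (hFγ.mono (Icc_subset_Icc_right hs.2))
      (fun r hr => (hF.differentiable one_ne_zero (γ r)).hasFDerivAt.comp_hasDerivAt r
        (h.2 r ⟨hr.1, hr.2.trans_le hs.2⟩))
      ((hF.continuous_fderiv_apply_self.comp_continuousOn h.1).mono
        (Icc_subset_Icc_right hs.2) |>.intervalIntegrable_of_Icc hs.1)
      intervalIntegrable_const fun r hr => hM r ⟨hr.1.le, hr.2.trans hs.2⟩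
  have := norm_sub_le_integral_of_hasDerivAt ht (f := fun s => γ s - s • F (γ 0))
    (g := fun s => M * s) (h.1.sub (continuousOn_id.smul continuousOn_const))
    (fun s hs => (h.2 s hs).sub (by simpa using (hasDerivAt_id s).smul_const (F (γ 0))))
    ((hFγ.sub continuousOn_const).intervalIntegrable_of_Icc ht)
    ((continuous_const_mul M).intervalIntegrable 0 t) fun s hs =>
      hFγ_sub s (Ioc_subset_Icc_self hs)
  rw [intervalIntegral.integral_const_mul, integral_id, zero_smul, sub_zero] at this
  calc ‖γ t - γ 0 - t • F (γ 0)‖ = ‖γ t - t • F (γ 0) - γ 0‖ := by congr 1; abel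
    _ ≤ M * ((t ^ 2 - 0 ^ 2) / 2) := this
    _ = t ^ 2 / 2 * M := by ring

theorem reach_zero_self (hx : x ∈ K) : Reach F K 0 x x :=
  ⟨fun _ => x, ⟨continuousOn_const, fun _ hs => (lt_asymm hs.1 hs.2).elim⟩, rfl, rfl,
    fun _ _ => hx⟩

theorem Reach.trans (hF : Continuous F) (ht₁ : 0 ≤ t₁) (ht₂ : 0 ≤ t₂)
    (h₁ : Reach F K t₁ x u) (h₂ : Reach F K t₂ u y) : Reach F K (t₁ + t₂) x y := by
  obtain ⟨γ₁, hγ₁, rfl, rfl, hK₁⟩ := h₁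
  obtain ⟨γ₂, hγ₂, h₀, rfl, hK₂⟩ := h₂
  refine ⟨_, hγ₁.append hF ht₁ ht₂ hγ₂ h₀.symm, appendCurve_of_le ht₁, ?_, fun s hs => ?_⟩
  · rw [appendCurve_of_ge h₀.symm (le_add_of_nonneg_right ht₂), add_sub_cancel_left]
  · rcases le_total s t₁ with hs₁ | hs₁
    · rw [appendCurve_of_le hs₁]
      exact hK₁ s ⟨hs.1, hs₁⟩
    · rw [appendCurve_of_ge h₀.symm hs₁]
      exact hK₂ _ ⟨sub_nonneg.2 hs₁, by linarith [hs.2]⟩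

theorem Reach.exists_mid (h : Reach F K t x y) (hs : 0 ≤ s) (hst : s ≤ t) :
    ∃ u, Reach F K s x u ∧ Reach F K (t - s) u y := by
  obtain ⟨γ, hγ, rfl, rfl, hK⟩ := h
  exact ⟨γ s, ⟨γ, hγ.mono hst, rfl, rfl, fun r hr => hK r ⟨hr.1, hr.2.trans hst⟩⟩,
    ⟨_, hγ.comp_add_right hs, by simp, by simp,
      fun r hr => hK _ ⟨by linarith [hr.1], by linarith [hr.2]⟩⟩⟩

theorem supNorm_ne_top {G : EuclideanSpace ℝ (Fin N) → EuclideanSpace ℝ (Fin N)}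
    (hK : IsCompact K) (hG : ContinuousOn G K) : supNorm G K ≠ ⊤ := by
  obtain ⟨C, hC⟩ := hK.exists_bound_of_continuousOn hG
  have : supNorm G K ≤ ENNReal.ofReal C := iSup₂_le fun z hz => by
    rw [← enorm_eq_nnnorm, ← ofReal_norm]
    exact ENNReal.ofReal_le_ofReal (hC z hz)
  exact ne_top_of_le_ne_top ENNReal.ofReal_ne_top this

theorem norm_le_toReal_supNorm {G : EuclideanSpace ℝ (Fin N) → EuclideanSpace ℝ (Fin N)}
    (h : supNorm G K ≠ ⊤) {z : EuclideanSpace ℝ (Fin N)} (hz : z ∈ K) :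
    ‖G z‖ ≤ (supNorm G K).toReal := by
  rw [← ENNReal.ofReal_le_iff_le_toReal h, ofReal_norm, enorm_eq_nnnorm]
  exact le_iSup₂ (f := fun z _ => (‖G z‖₊ : ENNReal)) z hz

theorem mem_gK_iff (hF : ContDiff ℝ 1 F) (hK : IsCompact K) :
    (x, y, t) ∈ GK F K ↔ 0 ≤ t ∧ ‖y - x‖ ≤ t * (supNorm F K).toReal ∧
      ‖y - x - t • F x‖ ≤ t ^ 2 / 2 * (supNorm (fun z => fderiv ℝ F z (F z)) K).toReal :=
  and_congr_right fun ht => and_congr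
    (coe_nnnorm_le_ofReal_mul_iff ht (supNorm_ne_top hK hF.continuous.continuousOn))
    (coe_nnnorm_le_ofReal_mul_iff (by positivity)
      (supNorm_ne_top hK hF.continuous_fderiv_apply_self.continuousOn))

theorem monotone_gammaK : Monotone (GammaK F K) :=
  fun _ _ hAB _ ⟨hG, hx, hy, u, h₁, h₂⟩ => ⟨hG, hx, hy, u, hAB h₁, hAB h₂⟩

theorem gammaK_rK_subset (hF : Continuous F) : GammaK F K (RK F K) ⊆ RK F K := by
  rintro ⟨x, y, t⟩ ⟨hG, -, -, u, ⟨ht, h₁⟩, -, h₂⟩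
  exact ⟨hG.1, by simpa using h₁.trans hF ht ht h₂⟩

theorem rK_subset_gammaK (hF : ContDiff ℝ 1 F) (hK : IsCompact K) :
    RK F K ⊆ GammaK F K (RK F K) := by
  rintro ⟨x, y, t⟩ ⟨ht : 0 ≤ t, h : Reach F K t x y⟩
  obtain ⟨u, h₁, h₂⟩ := h.exists_mid (by positivity) (half_le_self ht)
  obtain ⟨γ, hγ, rfl, rfl, hγK⟩ := h
  refine ⟨(mem_gK_iff hF hK).2 ⟨ht, ?_, ?_⟩, hγK 0 ⟨le_rfl, ht⟩, hγK t ⟨ht, le_rfl⟩, u,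
    ⟨by positivity, h₁⟩, by linarith, by rwa [sub_half] at h₂⟩
  · exact hγ.norm_sub_le hF.continuous ht fun s hs =>
      norm_le_toReal_supNorm (supNorm_ne_top hK hF.continuous.continuousOn) (hγK s hs)
  · exact hγ.norm_sub_sub_smul_le hF ht fun s hs =>
      norm_le_toReal_supNorm (supNorm_ne_top hK hF.continuous_fderiv_apply_self.continuousOn)
        (hγK s hs)

theorem subset_rK_of_subset_gammaK (hF : ContDiff ℝ 1 F) (hK : IsCompact K)
    {Z : Set (EuclideanSpace ℝ (Fin N) × EuclideanSpace ℝ (Fin N) × ℝ)}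
    (hZ : Z ⊆ GammaK F K Z) : Z ⊆ RK F K := by
  rintro ⟨x, y, t⟩ hxyt
  have hstep {a b : EuclideanSpace ℝ (Fin N)} {τ : ℝ} (h : (a, b, τ) ∈ Z) :=
    (mem_gK_iff hF hK).1 (hZ h).1
  obtain ⟨ht, hC, -⟩ := hstep hxyt
  rcases ht.eq_or_lt with rfl | ht
  · obtain rfl : y = x := by simpa [sub_eq_zero] using hC
    exact ⟨le_rfl, reach_zero_self (hZ hxyt).2.1⟩
  obtain ⟨d, rfl, rfl, hd₂, hdZ⟩ :=
    exists_dyadic_subdivision (fun _ _ _ h => (hZ h).2.2.2) hxyt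
  let S : DyadicChain F K t (supNorm F K).toReal
      (supNorm (fun z => fderiv ℝ F z (F z)) K).toReal :=
    { pt := d
      t_pos := ht
      pt_succ_two_mul := hd₂
      pt_mem := fun n k hk => by
        rcases hk.lt_or_eq with hk | rfl
        · exact (hZ (hdZ n k hk)).2.1
        · obtain ⟨j, hj⟩ := Nat.exists_eq_add_one.2 (Nat.two_pow_pos n)
          rw [hj]
          exact (hZ (hdZ n j (by omega))).2.2.1
      norm_pt_succ_sub_le := fun n k hk => (hstep (hdZ n k hk)).2.1
      norm_pt_succ_sub_sub_smul_le := fun n k hk => (hstep (hdZ n k hk)).2.2 }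
  exact ⟨ht.le, S.curve, (isIntCurve_iff hF.continuous).2
    ⟨S.continuousOn_curve, fun s hs => S.curve_eq_add_integral hF.continuous hs⟩,
    S.curve_zero, S.curve_self, fun s hs => S.curve_mem hK.isClosed hs⟩

/-- `Γ_K` is monotone, and for compact `K` the reachability set `R_K`
is the greatest fixpoint of `Γ_K`: it is a fixpoint and contains every post-fixpoint. -/
theorem reach_greatest_fixpoint {N : ℕ}
    (F : EuclideanSpace ℝ (Fin N) → EuclideanSpace ℝ (Fin N))
    (hF : ContDiff ℝ 1 F)
    (K : Set (EuclideanSpace ℝ (Fin N))) :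
    Monotone (GammaK F K) ∧
    (IsCompact K →
      GammaK F K (RK F K) = RK F K ∧
      ∀ Z : Set (EuclideanSpace ℝ (Fin N) × EuclideanSpace ℝ (Fin N) × ℝ),
        Z ⊆ GammaK F K Z → Z ⊆ RK F K) :=
  ⟨monotone_gammaK, fun hK =>
    ⟨(gammaK_rK_subset hF.continuous).antisymm (rK_subset_gammaK hF hK),
      fun _ => subset_rK_of_subset_gammaK hF hK⟩⟩

end ODEGfp
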